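/- If freely reduced words u and v on a_1^{±1}, …, a_m^{±1} represent conjugate elements of F, then there is a word w on a_1^{±1}, …, a_m^{±1} which is a concatenation of a prefix of u^{-1} with a suffix of v such that uw = wv in F. If moreover v is cyclically reduced (that is, vv is reduced), then w may be taken to be a prefix of u^{-1}. -/

import Mathlib

open FreeGroup SemidirectProduct

/-- Words on the letters `a₁^{±1}, …, a_m^{±1}` (`(i, true)` is `a_{i+1}`,
`(i, false)` is `a_{i+1}⁻¹`, with 0-based `Fin`-indexing of the generators). -/
abbrev FWord (m : ℕ) := List (Fin m × Bool)

/-- A word is freely reduced. -/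
def Reduced {m : ℕ} (w : FWord m) : Prop := FreeGroup.reduce w = w

/-- `φ` is the automorphism of `F = F(a₁, …, a_m)` with `φ(a₁) = a₁` and
`φ(aᵢ) = aᵢ aᵢ₋₁` for `2 ≤ i ≤ m`. -/
def IsHydraAut (m : ℕ) (φ : FreeGroup (Fin m) ≃* FreeGroup (Fin m)) : Prop :=
  ∀ i : Fin m, φ (FreeGroup.of i) =
    if i.val = 0 then FreeGroup.of i
    else FreeGroup.of i *
      FreeGroup.of (⟨i.val - 1, Nat.lt_of_le_of_lt (Nat.sub_le _ _) i.isLt⟩ : Fin m)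

/-- The free-by-cyclic group `H_m = F ⋊_φ ℤ`; here `s = inr (ofAdd 1)` and the defining
relation `s⁻¹ aᵢ s = φ(aᵢ)` holds.  The normal form `ũ s^p` is the element
`⟨ũ, Multiplicative.ofAdd p⟩`. -/
abbrev Hgrp (m : ℕ) (φ : FreeGroup (Fin m) ≃* FreeGroup (Fin m)) :=
  FreeGroup (Fin m) ⋊[zpowersHom (MulAut (FreeGroup (Fin m))) φ⁻¹] Multiplicative ℤ

/-- Letters of words over the generators of `H_m`: `some i` is `a_{i+1}`, `none` is `s`. -/
abbrev HWord (m : ℕ) := List (Option (Fin m) × Bool)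

def hLetter {m : ℕ} (φ : FreeGroup (Fin m) ≃* FreeGroup (Fin m)) (x : Option (Fin m) × Bool) :
    Hgrp m φ :=
  match x.1 with
  | some i => cond x.2 (SemidirectProduct.inl (FreeGroup.of i))
      (SemidirectProduct.inl (FreeGroup.of i))⁻¹
  | none => cond x.2 (SemidirectProduct.inr (Multiplicative.ofAdd (1:ℤ)))
      (SemidirectProduct.inr (Multiplicative.ofAdd (1:ℤ)))⁻¹

/-- The element of `H_m` represented by a word on `a₁^{±1}, …, a_m^{±1}, s^{±1}`. -/
def evalH {m : ℕ} (φ : FreeGroup (Fin m) ≃* FreeGroup (Fin m)) (w : HWord m) : Hgrp m φ :=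
  (w.map (hLetter φ)).prod

/-- Word length in `H_m` w.r.t. the generating set `{a₁, …, a_m, s}`. -/
noncomputable def lenH {m : ℕ} (φ : FreeGroup (Fin m) ≃* FreeGroup (Fin m)) (g : Hgrp m φ) : ℕ :=
  sInf {n | ∃ w : HWord m, evalH φ w = g ∧ w.length = n}

/-- Word length in `F` w.r.t. the generating set `{a₁, …, a_m}`. -/
noncomputable def lenF {m : ℕ} (g : FreeGroup (Fin m)) : ℕ :=
  sInf {n | ∃ w : FWord m, FreeGroup.mk w = g ∧ w.length = n}

/-- The rank of a word: the maximal `i` such that `aᵢ^{±1}` occurs in it (a letter with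
`Fin`-index `j` is `a_{j+1}`, so it contributes `j+1`); the empty word has rank `0`. -/
def wrank {m : ℕ} (w : FWord m) : ℕ := (w.map (fun x => x.1.val + 1)).foldr max 0

/-- The four types of rank-`i` pieces: `aᵢ u`, `u aᵢ⁻¹`, `aᵢ u aᵢ⁻¹`, `u`. -/
inductive PieceType | head | tail | both | plain
deriving DecidableEq

/-- `π` is a rank-`i` piece of the given type: `aᵢ u`, `u aᵢ⁻¹`, `aᵢ u aᵢ⁻¹` or `u`,
where `u` is a (possibly empty) word of rank at most `i - 1`.  Pieces of the first three
types have strict rank `i`. -/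
def IsPieceType {m : ℕ} (i : ℕ) (t : PieceType) (π : FWord m) : Prop :=
  match t with
  | .head => ∃ (x : Fin m × Bool) (u : FWord m),
      π = x :: u ∧ x.1.val + 1 = i ∧ x.2 = true ∧ wrank u < i
  | .tail => ∃ (x : Fin m × Bool) (u : FWord m),
      π = u ++ [x] ∧ x.1.val + 1 = i ∧ x.2 = false ∧ wrank u < i
  | .both => ∃ (j : Fin m) (u : FWord m),
      π = (j, true) :: (u ++ [(j, false)]) ∧ j.val + 1 = i ∧ wrank u < i
  | .plain => wrank π < i

def IsPiece {m : ℕ} (i : ℕ) (π : FWord m) : Prop := ∃ t, IsPieceType i t π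

/-- The rank-`i` piece decomposition of `w`: a decomposition into rank-`i` pieces
with the minimal possible number of pieces. -/
def IsPieceDecomp {m : ℕ} (i : ℕ) (w : FWord m) (L : List (FWord m)) : Prop :=
  L.flatten = w ∧ (∀ π ∈ L, IsPiece i π) ∧
    ∀ L' : List (FWord m), L'.flatten = w → (∀ π ∈ L', IsPiece i π) → L.length ≤ L'.length

/-- The number of pieces in the rank-`i` decomposition of `w`, for `i = wrank w`. -/
noncomputable def piecesCount {m : ℕ} (w : FWord m) : ℕ :=
  sInf {p | ∃ L : List (FWord m),
    L.flatten = w ∧ (∀ π ∈ L, IsPiece (wrank w) π) ∧ L.length = p}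

/-- The number of pieces of an element of the free group. -/
noncomputable def piecesCountF {m : ℕ} (g : FreeGroup (Fin m)) : ℕ :=
  piecesCount (FreeGroup.toWord g)

/-!
Every reduced word factors as `p c p⁻¹` with `c` cyclically reduced (`reduceCyclically` and
`conjugator`). Conjugate cyclically reduced words are cyclic permutations of each other: strip
the last letter `x` of a reduced conjugator `w`; either `x c x⁻¹` freely reduces to a rotation
of `c`, or nothing cancels and `w c w⁻¹` is already reduced, hence equal to the cyclically
reduced target, which is absurd since its two ends cancel. So if `u = p c₁ c₂ p⁻¹` and
`v = q c₂ c₁ q⁻¹`, then `w = p c₂⁻¹ q⁻¹` satisfies `u w = w v`, and `q` is empty when `v` is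
cyclically reduced.
-/

theorem List.IsRotated.exists_eq_append {α : Type*} {l l' : List α} (h : l ~r l') :
    ∃ l₁ l₂, l = l₁ ++ l₂ ∧ l' = l₂ ++ l₁ := by
  obtain ⟨n, hn, rfl⟩ := List.isRotated_iff_mod.1 h
  exact ⟨l.take n, l.drop n, (l.take_append_drop n).symm, List.rotate_eq_drop_append_take hn⟩

namespace FreeGroup

variable {α : Type*} {L L₁ L₂ c d : List (α × Bool)}

theorem IsReduced.invRev (h : IsReduced L) : IsReduced (invRev L) := by
  classical
  rw [isReduced_iff_reduce_eq] at h ⊢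
  rw [reduce_invRev, h]

theorem IsReduced.eq_of_mk_eq (h₁ : IsReduced L₁) (h₂ : IsReduced L₂) (h : mk L₁ = mk L₂) :
    L₁ = L₂ := by
  classical
  rw [← h₁.reduce_eq, ← h₂.reduce_eq]
  exact reduce.sound h

theorem isCyclicallyReduced_iff_isReduced_append_self :
    IsCyclicallyReduced L ↔ IsReduced (L ++ L) := by
  simp only [isCyclicallyReduced_iff, IsReduced, List.isChain_append, and_self_left]

theorem IsCyclicallyReduced.append_comm (h : IsCyclicallyReduced (L₁ ++ L₂)) :
    IsCyclicallyReduced (L₂ ++ L₁) := by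
  rcases eq_or_ne (L₁ ++ L₂) [] with h0 | h0
  · simp_all
  rw [isCyclicallyReduced_iff_isReduced_append_self] at h ⊢
  have h3 : IsReduced (L₁ ++ L₂ ++ (L₁ ++ L₂) ++ (L₁ ++ L₂)) := h.append_overlap h h0
  exact h3.infix ⟨L₁, L₂, by simp⟩

theorem IsCyclicallyReduced.isRotated (h : IsCyclicallyReduced L₁) (hr : L₁ ~r L₂) :
    IsCyclicallyReduced L₂ := by
  obtain ⟨l₁, l₂, rfl, rfl⟩ := hr.exists_eq_append
  exact h.append_comm

theorem IsCyclicallyReduced.conjugator_eq_nil [DecidableEq α] (h : IsCyclicallyReduced L) :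
    reduceCyclically.conjugator L = [] := by
  induction L using List.bidirectionalRec with
  | nil => simp
  | singleton => simp
  | cons_append a l b =>
    rw [reduceCyclically.conjugator.cons_append, if_neg]
    rintro ⟨h1, h2⟩
    have := ((isCyclicallyReduced_cons_append_iff.1 h).2 h1)
    simp [← h2] at this

theorem not_isCyclicallyReduced_append_invRev (hL : L₁ ≠ []) :
    ¬ IsCyclicallyReduced (L₁ ++ L₂ ++ invRev L₁) := by
  obtain ⟨a, l, rfl⟩ := List.exists_cons_of_ne_nil hL
  intro h
  have hlast : (a :: l ++ L₂ ++ invRev (a :: l)).getLast? = some (a.1, !a.2) := by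
    rw [invRev_cons, ← List.append_assoc]
    exact List.getLast?_concat
  simpa using h.2 _ hlast a (by simp)

theorem IsCyclicallyReduced.isReduced_or_isRotated_conj_singleton (hc : IsCyclicallyReduced c)
    (x : α × Bool) :
    IsReduced ([x] ++ c ++ invRev [x]) ∨ ∃ c', c ~r c' ∧ mk ([x] ++ c ++ invRev [x]) = mk c' := by
  rcases eq_or_ne c [] with rfl | hne
  · refine .inr ⟨[], .refl _, ?_⟩
    rw [List.append_nil, ← mul_mk, ← inv_mk, mul_inv_cancel, one_eq_mk]
  by_cases hhead : c.head? = some (x.1, !x.2)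
  · obtain ⟨t, rfl⟩ := List.head?_eq_some_iff.1 hhead
    refine .inr ⟨t ++ [(x.1, !x.2)], .cons_append_singleton, ?_⟩
    change mk ([x] ++ (invRev [x] ++ t) ++ invRev [x]) = mk (t ++ invRev [x])
    simp only [← mul_mk, ← inv_mk]
    group
  by_cases hlast : c.getLast? = some x
  · obtain ⟨t, rfl⟩ := List.getLast?_eq_some_iff.1 hlast
    refine .inr ⟨x :: t, List.isRotated_concat _ _, ?_⟩
    change mk ([x] ++ (t ++ [x]) ++ invRev [x]) = mk ([x] ++ t)
    simp only [← mul_mk, ← inv_mk]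
    group
  left
  refine List.isChain_append.2 ⟨List.isChain_append.2 ⟨.singleton _, hc.isReduced, ?_⟩,
    .singleton _, ?_⟩
  · rintro a ha b hb h1
    simp only [List.getLast?_singleton, Option.mem_some_iff] at ha
    subst ha
    rw [Option.mem_def] at hb
    rw [hb, Option.some_inj] at hhead
    by_contra h2
    exact hhead (Prod.ext h1.symm (by grind))
  · rintro a ha b hb h1
    rw [List.getLast?_append_of_ne_nil _ hne, Option.mem_def] at ha
    simp only [invRev, List.map_cons, List.map_nil, List.reverse_cons, List.reverse_nil,
      List.nil_append, List.head?_cons, Option.mem_some_iff] at hb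
    subst hb
    rw [ha, Option.some_inj] at hlast
    by_contra h2
    exact hlast (Prod.ext h1 (by grind))

theorem IsCyclicallyReduced.isRotated_of_mk_conj_eq {w : List (α × Bool)} (hw : IsReduced w)
    (hc : IsCyclicallyReduced c) (hd : IsCyclicallyReduced d)
    (h : mk (w ++ c ++ invRev w) = mk d) : c ~r d := by
  induction w using List.reverseRecOn generalizing c with
  | nil => exact hc.isReduced.eq_of_mk_eq hd.isReduced (by simpa [invRev] using h) ▸ .refl c
  | append_singleton w x ih =>
    have hw' : IsReduced w := hw.infix ⟨[], [x], by simp⟩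
    have hconj : mk (w ++ [x] ++ c ++ invRev (w ++ [x])) =
        mk w * mk ([x] ++ c ++ invRev [x]) * (mk w)⁻¹ := by
      simp only [invRev_append, ← mul_mk, ← inv_mk]
      group
    rcases hc.isReduced_or_isRotated_conj_singleton x with hred | ⟨c', hcc', hmk⟩
    · have h₁ : IsReduced (w ++ [x] ++ c ++ invRev [x]) := by
        rw [List.append_assoc _ c]
        exact hw.append_overlap (by rwa [← List.append_assoc]) (List.cons_ne_nil _ _)
      have h₂ : IsReduced (w ++ [x] ++ c ++ invRev (w ++ [x])) := by
        rw [invRev_append, ← List.append_assoc]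
        refine h₁.append_overlap ?_ (List.cons_ne_nil _ _)
        rw [← invRev_append]
        exact hw.invRev
      rw [← h₂.eq_of_mk_eq hd.isReduced h] at hd
      exact absurd hd (not_isCyclicallyReduced_append_invRev (by simp))
    · refine hcc'.trans (ih hw' (hc.isRotated hcc') ?_)
      rw [← h, hconj, hmk]
      simp only [← mul_mk, ← inv_mk]

theorem IsCyclicallyReduced.isRotated_of_isConj (hc : IsCyclicallyReduced c)
    (hd : IsCyclicallyReduced d) (h : IsConj (mk c) (mk d)) : c ~r d := by
  classical
  obtain ⟨g, hg⟩ := isConj_iff.1 h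
  refine hc.isRotated_of_mk_conj_eq (w := g.toWord) isReduced_toWord hd ?_
  rw [← hg, ← mul_mk, ← mul_mk, ← inv_mk, mk_toWord]

open reduceCyclically in
theorem exists_prefix_invRev_mul_eq_mul [DecidableEq α] {u v : List (α × Bool)}
    (hu : IsReduced u) (hv : IsReduced v) (h : IsConj (mk u) (mk v)) :
    ∃ w₁, w₁ <+: invRev u ∧
      mk u * mk (w₁ ++ invRev (conjugator v)) = mk (w₁ ++ invRev (conjugator v)) * mk v := by
  have conj_core (L : List (α × Bool)) : IsConj (mk (reduceCyclically L)) (mk L) :=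
    isConj_iff.2 ⟨mk (conjugator L), by
      conv_rhs => rw [← conj_conjugator_reduceCyclically L]
      rw [← mul_mk, ← mul_mk, ← inv_mk]⟩
  obtain ⟨c₁, c₂, hc, he⟩ := (isCyclicallyReduced hu).isRotated_of_isConj (isCyclicallyReduced hv)
    ((conj_core u).trans (h.trans (conj_core v).symm)) |>.exists_eq_append
  have hu' := conj_conjugator_reduceCyclically u
  have hv' := conj_conjugator_reduceCyclically v
  generalize conjugator u = p at hu' ⊢
  generalize conjugator v = q at hv' ⊢
  rw [hc] at hu'
  rw [he] at hv'
  subst hu' hv'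
  refine ⟨p ++ invRev c₂, ⟨invRev c₁ ++ invRev p, ?_⟩, ?_⟩
  · simp only [invRev_append, invRev_invRev, List.append_assoc]
  · simp only [← mul_mk, ← inv_mk]
    group

end FreeGroup

theorem stmt_1_general (m : ℕ)
    (u v : FWord m) (hu : Reduced u) (hv : Reduced v)
    (hconj : IsConj (FreeGroup.mk u) (FreeGroup.mk v)) :
    (∃ w₁ w₂ : FWord m, w₁ <+: FreeGroup.invRev u ∧ w₂ <:+ v ∧
      FreeGroup.mk u * FreeGroup.mk (w₁ ++ w₂) =
        FreeGroup.mk (w₁ ++ w₂) * FreeGroup.mk v) ∧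
    (Reduced (v ++ v) →
      ∃ w₁ : FWord m, w₁ <+: FreeGroup.invRev u ∧
        FreeGroup.mk u * FreeGroup.mk w₁ = FreeGroup.mk w₁ * FreeGroup.mk v) := by
  obtain ⟨w₁, hw₁, hw⟩ :=
    exists_prefix_invRev_mul_eq_mul (.of_reduce_eq hu) (.of_reduce_eq hv) hconj
  refine ⟨⟨w₁, _, hw₁, ⟨_, reduceCyclically.conj_conjugator_reduceCyclically v⟩, hw⟩,
    fun hvv => ⟨w₁, hw₁, ?_⟩⟩
  have hv_cyc : IsCyclicallyReduced v :=
    isCyclicallyReduced_iff_isReduced_append_self.2 (.of_reduce_eq hvv)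
  rwa [hv_cyc.conjugator_eq_nil, invRev_empty, List.append_nil] at hw

/-- Lemma 2.1, first part: if reduced words `u`, `v` represent conjugate
elements of `F`, there is a conjugating word which is a concatenation of a prefix of `u⁻¹`
with a suffix of `v`; if `v` is cyclically reduced, a prefix of `u⁻¹` suffices. -/
theorem stmt_1 (m : ℕ) (hm : 2 ≤ m)
    (u v : FWord m) (hu : Reduced u) (hv : Reduced v)
    (hconj : IsConj (FreeGroup.mk u) (FreeGroup.mk v)) :
    (∃ w₁ w₂ : FWord m, w₁ <+: FreeGroup.invRev u ∧ w₂ <:+ v ∧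
      FreeGroup.mk u * FreeGroup.mk (w₁ ++ w₂) =
        FreeGroup.mk (w₁ ++ w₂) * FreeGroup.mk v) ∧
    (Reduced (v ++ v) →
      ∃ w₁ : FWord m, w₁ <+: FreeGroup.invRev u ∧
        FreeGroup.mk u * FreeGroup.mk w₁ = FreeGroup.mk w₁ * FreeGroup.mk v) :=
  stmt_1_general m u v hu hv hconj
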